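/- Let X be a non-degenerate A-correspondence. There exists a smallest fully X-invariant ideal I_X ⊴ A (an ideal I is fully X-invariant if X^{-1}(I) = I). Moreover, I_X = 0 if and only if the left action φ_X is injective. -/

import Mathlib

/-! Basic framework: C*-correspondences over (possibly non-unital) C*-algebras,
interior tensor products (characterized by their universal properties),
closed ideals, and unitary isomorphisms of correspondences. -/

noncomputable section

/-- A (non-degenerate) A–B C*-correspondence: a right Hilbert `B`-module `X`
together with a left action of `A` by adjointable operators. -/
structure Corr (A B : Type) [NonUnitalCStarAlgebra A] [NonUnitalCStarAlgebra B] : Type 1 where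
  X : Type
  [grp : NormedAddCommGroup X]
  [nsc : NormedSpace ℂ X]
  [cpl : CompleteSpace X]
  /-- the right action of `B` -/
  sm : X → B → X
  /-- the `B`-valued inner product (linear in the second variable) -/
  ip : X → X → B
  /-- the left action of `A` -/
  φ : A → X → X
  sm_add : ∀ x y b, sm (x + y) b = sm x b + sm y b
  sm_add' : ∀ x b c, sm x (b + c) = sm x b + sm x c
  sm_mul : ∀ x b c, sm (sm x b) c = sm x (b * c)
  sm_smul : ∀ (t : ℂ) x b, sm (t • x) b = t • sm x b
  sm_smul' : ∀ (t : ℂ) x b, sm x (t • b) = t • sm x b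
  ip_add : ∀ x y z, ip x (y + z) = ip x y + ip x z
  ip_smul : ∀ (t : ℂ) x y, ip x (t • y) = t • ip x y
  ip_sm : ∀ x y b, ip x (sm y b) = ip x y * b
  ip_star : ∀ x y, star (ip x y) = ip y x
  ip_pos : ∀ x, ∃ b, ip x x = star b * b
  ip_norm : ∀ x, ‖x‖ ^ 2 = ‖ip x x‖
  φ_add : ∀ a x y, φ a (x + y) = φ a x + φ a y
  φ_add' : ∀ a b x, φ (a + b) x = φ a x + φ b x
  φ_smul : ∀ a (t : ℂ) x, φ a (t • x) = t • φ a x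
  φ_smul' : ∀ (t : ℂ) a x, φ (t • a) x = t • φ a x
  φ_mul : ∀ a b x, φ (a * b) x = φ a (φ b x)
  φ_adj : ∀ a x y, ip (φ a x) y = ip x (φ (star a) y)
  /-- non-degeneracy of the left action -/
  nondeg : closure (Submodule.span ℂ {z | ∃ a x, z = φ a x} : Set X) = Set.univ

attribute [instance] Corr.grp Corr.nsc Corr.cpl

variable {A B C : Type} [NonUnitalCStarAlgebra A] [NonUnitalCStarAlgebra B]
  [NonUnitalCStarAlgebra C]

/-- `Z.setR I` is the closed submodule `Z·I` of `Z`. -/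
def Corr.setR (Z : Corr A B) (I : Set B) : Set Z.X :=
  closure (Submodule.span ℂ {x | ∃ ξ b, b ∈ I ∧ x = Z.sm ξ b} : Set Z.X)

/-- `Z.setL I` is the closed subspace `I·Z` of `Z`. -/
def Corr.setL (Z : Corr A B) (I : Set A) : Set Z.X :=
  closure (Submodule.span ℂ {x | ∃ a ξ, a ∈ I ∧ x = Z.φ a ξ} : Set Z.X)

/-- `Z⁻¹(I) = {a ∈ A : φ_Z(a)Z ⊆ ZI}`. -/
def Corr.inv (Z : Corr A B) (I : Set B) : Set A := {a | ∀ ξ, Z.φ a ξ ∈ Z.setR I}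

/-- The closed ideal of `B` generated by the inner products of `Z`. -/
def Corr.ipSet (Z : Corr A B) : Set B :=
  closure (Submodule.span ℂ {b | ∃ x y, b = Z.ip x y} : Set B)

/-- A generalized compact operator on the underlying Hilbert module of a correspondence:
one that is approximable in operator norm by finite sums of "rank one" operators
`θ_{ξ,η} : z ↦ ξ·⟨η,z⟩`. -/
def Corr.IsCompactOp (Z : Corr A B) (f : Z.X → Z.X) : Prop :=
  ∀ ε > (0 : ℝ), ∃ (n : ℕ) (ξ η : Fin n → Z.X),
    ∀ z, ‖f z - ∑ i, Z.sm (ξ i) (Z.ip (η i) z)‖ ≤ ε * ‖z‖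

/-- A closed (two-sided, automatically self-adjoint) ideal of a C*-algebra, as a set. -/
structure IsCIdeal {B : Type} [NonUnitalCStarAlgebra B] (I : Set B) : Prop where
  isClosed : IsClosed I
  zero_mem : (0 : B) ∈ I
  add_mem : ∀ x y, x ∈ I → y ∈ I → x + y ∈ I
  smul_mem : ∀ (t : ℂ) x, x ∈ I → t • x ∈ I
  mul_left_mem : ∀ b x, x ∈ I → b * x ∈ I
  mul_right_mem : ∀ b x, x ∈ I → x * b ∈ I

/-- `t : Z₁ × Z₂ → T` exhibits `T` as the interior tensor product `Z₁ ⊗_B Z₂`. -/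
structure IsTensor (Z₁ : Corr A B) (Z₂ : Corr B C) (T : Corr A C)
    (t : Z₁.X → Z₂.X → T.X) : Prop where
  add_left : ∀ x x' y, t (x + x') y = t x y + t x' y
  add_right : ∀ x y y', t x (y + y') = t x y + t x y'
  smul_left : ∀ (c : ℂ) x y, t (c • x) y = c • t x y
  balanced : ∀ x b y, t (Z₁.sm x b) y = t x (Z₂.φ b y)
  sm_right : ∀ x y c, t x (Z₂.sm y c) = T.sm (t x y) c
  act_left : ∀ a x y, T.φ a (t x y) = t (Z₁.φ a x) y
  inner : ∀ x x' y y', T.ip (t x y) (t x' y') = Z₂.ip y (Z₂.φ (Z₁.ip x x') y')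
  dense : closure (Submodule.span ℂ {z | ∃ x y, z = t x y} : Set T.X) = Set.univ

/-- `X ≅ Z₁ ⊗ Z₂` (unitary isomorphism with the interior tensor product). -/
def IsTensorProd (Z₁ : Corr A B) (Z₂ : Corr B C) (T : Corr A C) : Prop :=
  ∃ t, IsTensor Z₁ Z₂ T t

/-- A unitary isomorphism of A–B correspondences. -/
def CorrIso (Z W : Corr A B) : Prop :=
  ∃ u : Z.X → W.X, Function.Surjective u ∧ (∀ x y, u (x + y) = u x + u y) ∧
    (∀ (c : ℂ) x, u (c • x) = c • u x) ∧ (∀ a x, u (Z.φ a x) = W.φ a (u x)) ∧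
    (∀ x b, u (Z.sm x b) = W.sm (u x) b) ∧ (∀ x y, W.ip (u x) (u y) = Z.ip x y)

end

/-! The least fixed point of the monotone map `I ↦ X⁻¹(I)` on all subsets of `A` is the smallest
fully invariant ideal, because `X⁻¹(I)` is a closed ideal for every `I`. The ideal property rests
on the adjointability bound `‖φ a x‖ ≤ ‖a‖ ‖x‖`, obtained from `a⋆a ≤ ‖a‖²` in the unitization of
`A` and positivity of `x ↦ ⟨x, φ(u) x⟩`. Since `X⁻¹(0) = ker φ`, the least fixed point vanishes
exactly when `{0}` is itself a fixed point, i.e. when `φ` is injective. -/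

namespace Corr

variable {A B : Type} [NonUnitalCStarAlgebra A] [NonUnitalCStarAlgebra B] (Z : Corr A B)

lemma ip_sub_right (x y z : Z.X) : Z.ip x (y - z) = Z.ip x y - Z.ip x z := by
  rw [sub_eq_add_neg, Z.ip_add, ← neg_one_smul ℂ z, Z.ip_smul, neg_one_smul, ← sub_eq_add_neg]

lemma ip_add_left (x y z : Z.X) : Z.ip (x + y) z = Z.ip x z + Z.ip y z := by
  rw [← Z.ip_star z, Z.ip_add, star_add, Z.ip_star, Z.ip_star]

lemma ip_smul_left (t : ℂ) (x y : Z.X) : Z.ip (t • x) y = star t • Z.ip x y := by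
  rw [← Z.ip_star y, Z.ip_smul, star_smul, Z.ip_star]

lemma ip_φ (a : A) (x y : Z.X) : Z.ip x (Z.φ a y) = Z.ip (Z.φ (star a) x) y := by
  simpa using (Z.φ_adj (star a) x y).symm

lemma eq_zero_of_ip_self_eq_zero {x : Z.X} (h : Z.ip x x = 0) : x = 0 := by
  have hx := Z.ip_norm x
  rw [h, norm_zero, sq_eq_zero_iff, norm_eq_zero] at hx
  exact hx

lemma φ_zero_left (x : Z.X) : Z.φ 0 x = 0 := by
  simpa using Z.φ_smul' 0 0 x

lemma φ_neg_left (a : A) (x : Z.X) : Z.φ (-a) x = -Z.φ a x := by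
  simpa using Z.φ_smul' (-1) a x

lemma sm_zero_right (x : Z.X) : Z.sm x 0 = 0 := by
  simpa using Z.sm_smul' 0 x 0

lemma φ_sm (a : A) (x : Z.X) (b : B) : Z.φ a (Z.sm x b) = Z.sm (Z.φ a x) b := by
  have hip : ∀ y, Z.ip y (Z.φ a (Z.sm x b) - Z.sm (Z.φ a x) b) = 0 := fun y => by
    rw [Z.ip_sub_right, Z.ip_φ, Z.ip_sm, Z.ip_sm, Z.ip_φ, sub_self]
  exact sub_eq_zero.mp (Z.eq_zero_of_ip_self_eq_zero (hip _))

lemma ip_self_nonneg [PartialOrder B] [StarOrderedRing B] (x : Z.X) : 0 ≤ Z.ip x x := by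
  obtain ⟨b, hb⟩ := Z.ip_pos x
  exact hb ▸ star_mul_self_nonneg b

def φUnitization (u : Unitization ℂ A) (x : Z.X) : Z.X := u.fst • x + Z.φ u.snd x

lemma φUnitization_mul (u v : Unitization ℂ A) (x : Z.X) :
    Z.φUnitization (u * v) x = Z.φUnitization u (Z.φUnitization v x) := by
  simp only [φUnitization, Unitization.fst_mul, Unitization.snd_mul, Z.φ_add', Z.φ_smul',
    Z.φ_mul, Z.φ_add, Z.φ_smul, mul_smul, smul_add]
  abel

lemma ip_φUnitization_left (u : Unitization ℂ A) (x y : Z.X) :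
    Z.ip (Z.φUnitization u x) y = Z.ip x (Z.φUnitization (star u) y) := by
  simp only [φUnitization, Unitization.fst_star, Unitization.snd_star]
  rw [Z.ip_add_left, Z.ip_add, Z.ip_smul_left, Z.ip_smul, Z.φ_adj]

lemma ip_φUnitization_nonneg [PartialOrder B] [StarOrderedRing B] {u : Unitization ℂ A}
    (hu : 0 ≤ u) (x : Z.X) : 0 ≤ Z.ip x (Z.φUnitization u x) := by
  obtain ⟨f, rfl⟩ := CStarAlgebra.nonneg_iff_eq_star_mul_self.mp hu
  rw [Z.φUnitization_mul, ← Z.ip_φUnitization_left]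
  exact Z.ip_self_nonneg _

lemma ip_φ_self_le [PartialOrder B] [StarOrderedRing B] (a : A) (x : Z.X) :
    Z.ip (Z.φ a x) (Z.φ a x) ≤ ((‖a‖ ^ 2 : ℝ) : ℂ) • Z.ip x x := by
  have hle : star (a : Unitization ℂ A) * a ≤ algebraMap ℝ _ (‖a‖ ^ 2) := by
    simpa only [Unitization.norm_inr] using
      CStarAlgebra.star_mul_le_algebraMap_norm_sq (a := (a : Unitization ℂ A))
  have h := Z.ip_φUnitization_nonneg (sub_nonneg.mpr hle) x
  have hφ : Z.φUnitization (algebraMap ℝ _ (‖a‖ ^ 2) - star (a : Unitization ℂ A) * a) x =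
      ((‖a‖ ^ 2 : ℝ) : ℂ) • x - Z.φ (star a) (Z.φ a x) := by
    simp [φUnitization, Unitization.algebraMap_eq_inl_comp, sub_eq_add_neg, Z.φ_neg_left, Z.φ_mul]
  rwa [hφ, Z.ip_sub_right, Z.ip_smul, Z.ip_φ, star_star, sub_nonneg] at h

lemma norm_φ_apply_le (a : A) (x : Z.X) : ‖Z.φ a x‖ ≤ ‖a‖ * ‖x‖ := by
  let _ := CStarAlgebra.spectralOrder B
  have := CStarAlgebra.spectralOrderedRing B
  have h := CStarAlgebra.norm_le_norm_of_nonneg_of_le (Z.ip_self_nonneg _) (Z.ip_φ_self_le a x)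
  rw [norm_smul, ← Z.ip_norm, ← Z.ip_norm, Complex.norm_real, Real.norm_of_nonneg (by positivity),
    ← mul_pow] at h
  exact (pow_le_pow_iff_left₀ (norm_nonneg _) (by positivity) two_ne_zero).mp h

lemma continuous_φ (a : A) : Continuous (Z.φ a) :=
  AddMonoidHomClass.continuous_of_bound (AddMonoidHom.mk' (Z.φ a) (Z.φ_add a)) ‖a‖
    (Z.norm_φ_apply_le a)

lemma continuous_φ_apply (x : Z.X) : Continuous fun a => Z.φ a x :=
  AddMonoidHomClass.continuous_of_bound (AddMonoidHom.mk' (fun a => Z.φ a x) (Z.φ_add' · · x))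
    ‖x‖ fun a => (Z.norm_φ_apply_le a x).trans_eq (mul_comm _ _)

lemma setR_eq_topologicalClosure (I : Set B) :
    Z.setR I = (Submodule.span ℂ {x | ∃ ξ b, b ∈ I ∧ x = Z.sm ξ b}).topologicalClosure :=
  (Submodule.topologicalClosure_coe _).symm

lemma mapsTo_φ_setR (a : A) (I : Set B) : Set.MapsTo (Z.φ a) (Z.setR I) (Z.setR I) := by
  let φa : Z.X →ₗ[ℂ] Z.X := ⟨⟨Z.φ a, Z.φ_add a⟩, Z.φ_smul a⟩
  have hgen : Set.MapsTo φa {x | ∃ ξ b, b ∈ I ∧ x = Z.sm ξ b} {x | ∃ ξ b, b ∈ I ∧ x = Z.sm ξ b} := by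
    rintro _ ⟨ξ, b, hb, rfl⟩
    exact ⟨Z.φ a ξ, b, hb, Z.φ_sm a ξ b⟩
  exact (Submodule.mapsTo_span hgen).closure (Z.continuous_φ a)

lemma setR_singleton_zero : Z.setR ({0} : Set B) = {0} := by
  have hgen : {x | ∃ ξ, ∃ b : B, b ∈ ({0} : Set B) ∧ x = Z.sm ξ b} = ({0} : Set Z.X) := by
    ext x
    constructor
    · rintro ⟨ξ, b, rfl, rfl⟩
      exact Z.sm_zero_right ξ
    · rintro rfl
      exact ⟨0, 0, rfl, (Z.sm_zero_right 0).symm⟩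
  rw [setR, hgen, Submodule.span_zero_singleton, Submodule.bot_coe, closure_singleton]

lemma setR_mono : Monotone Z.setR := by
  intro I J hIJ
  refine closure_mono (Submodule.span_mono ?_)
  rintro _ ⟨ξ, b, hb, rfl⟩
  exact ⟨ξ, b, hIJ hb, rfl⟩

lemma inv_mono : Monotone Z.inv :=
  fun _ _ hIJ _ ha ξ => Z.setR_mono hIJ (ha ξ)

lemma isCIdeal_inv (I : Set B) : IsCIdeal (Z.inv I) := by
  rw [inv]
  simp only [Z.setR_eq_topologicalClosure I]
  constructor
  · simp only [Set.ofPred_forall]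
    exact isClosed_iInter fun ξ =>
      (Submodule.isClosed_topologicalClosure _).preimage (Z.continuous_φ_apply ξ)
  · intro ξ
    rw [Z.φ_zero_left]
    exact zero_mem _
  · intro a b ha hb ξ
    rw [Z.φ_add']
    exact add_mem (ha ξ) (hb ξ)
  · intro t a ha ξ
    rw [Z.φ_smul']
    exact Submodule.smul_mem _ t (ha ξ)
  · intro b a ha ξ
    rw [Z.φ_mul]
    exact Z.mapsTo_φ_setR b I (ha ξ)
  · intro b a ha ξ
    rw [Z.φ_mul]
    exact ha _

lemma mem_inv_singleton_zero {a : A} : a ∈ Z.inv {0} ↔ Z.φ a = 0 := by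
  simp only [inv, setR_singleton_zero, Set.mem_ofPred_eq, Set.mem_singleton_iff, funext_iff,
    Pi.zero_apply]

lemma inv_singleton_zero_eq_iff_injective :
    Z.inv ({0} : Set B) = {0} ↔ Function.Injective Z.φ := by
  let φHom : A →+ (Z.X → Z.X) := AddMonoidHom.mk' Z.φ fun a b => funext (Z.φ_add' a b)
  show _ ↔ Function.Injective φHom
  simp only [injective_iff_map_eq_zero' φHom, Set.ext_iff, Set.mem_singleton_iff,
    mem_inv_singleton_zero]
  rfl

def invHom (X : Corr A A) : Set A →o Set A := ⟨X.inv, X.inv_mono⟩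

end Corr

/-- there is a smallest fully `X`-invariant closed ideal `I_X ⊴ A`
(`I` is fully `X`-invariant when `X⁻¹(I) = I`), and `I_X = 0` iff the left action
`φ_X` is injective. -/
theorem stmt7 {A : Type} [NonUnitalCStarAlgebra A] (X : Corr A A) :
    ∃ I : Set A, IsCIdeal I ∧ X.inv I = I ∧
      (∀ J : Set A, IsCIdeal J → X.inv J = J → I ⊆ J) ∧
      (I = {0} ↔ Function.Injective X.φ) := by
  have hfix : X.inv (OrderHom.lfp X.invHom) = OrderHom.lfp X.invHom := X.invHom.map_lfp
  have hideal := hfix ▸ X.isCIdeal_inv (OrderHom.lfp X.invHom)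
  refine ⟨OrderHom.lfp X.invHom, hideal, hfix, fun J _ hJ => X.invHom.lfp_le_fixed hJ, ?_⟩
  rw [← X.inv_singleton_zero_eq_iff_injective]
  constructor
  · intro h
    rwa [h] at hfix
  · intro h
    exact (X.invHom.lfp_le_fixed h).antisymm (Set.singleton_subset_iff.mpr hideal.zero_mem)
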